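/- Let C₁ and C₂ be cycles with t₁ and t₂ turns whose covered pixel sets are disjoint, and suppose there exist pixels p₁ covered by C₁ and p₂ covered by C₂ that are adjacent. Then there exists a single cycle covering the union of the pixel sets covered by C₁ and C₂ that has at most t₁ + t₂ + 2 turns. -/

import Mathlib

/-- A pixel is a point of `ℤ × ℤ`. -/
abbrev Pixel : Type := ℤ × ℤ

/-- Two pixels are adjacent if their ℓ¹-distance is 1. -/
def Adjacent (p q : Pixel) : Prop := |p.1 - q.1| + |p.2 - q.2| = 1

/-- A cycle: a cyclic sequence of `k ≥ 2` pixels (encoded as a `k`-periodic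
function on `ℤ`) in which consecutive pixels are adjacent. -/
structure GridCycle where
  k : ℕ
  two_le : 2 ≤ k
  pts : ℤ → Pixel
  periodic : ∀ i : ℤ, pts (i + k) = pts i
  adj : ∀ i : ℤ, Adjacent (pts i) (pts (i + 1))

/-- The set of pixels covered by a cycle. -/
def GridCycle.covers (C : GridCycle) : Set Pixel := Set.range C.pts

/-- Turn cost at position `i`: 0 if the walk goes straight, 2 for a U-turn,
1 for a 90° turn. -/
def GridCycle.turnCost (C : GridCycle) (i : ℤ) : ℕ :=
  if C.pts (i + 1) - C.pts i = C.pts i - C.pts (i - 1) then 0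
  else if C.pts (i + 1) - C.pts i = -(C.pts i - C.pts (i - 1)) then 2
  else 1

/-- The number of turns of a cycle: total turn cost over all positions. -/
def GridCycle.turns (C : GridCycle) : ℕ :=
  ∑ i ∈ Finset.range C.k, C.turnCost (i : ℤ)

/-- A set of pixels is connected under adjacency. -/
def ConnectedIn (P : Set Pixel) : Prop :=
  ∀ p ∈ P, ∀ q ∈ P, Relation.ReflTransGen (fun a b => b ∈ P ∧ Adjacent a b) p q

/-- A region is a finite nonempty set of pixels connected under adjacency. -/
def IsRegion (P : Set Pixel) : Prop := P.Finite ∧ P.Nonempty ∧ ConnectedIn P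

/-- A tour of `P`: a cycle whose pixels lie in `P` covering every pixel of `P`. -/
def IsTour (P : Set Pixel) (C : GridCycle) : Prop := C.covers = P

/-- A cycle cover of `P`: a finite collection of cycles with pixels in `P`
covering every pixel of `P`. -/
def IsCycleCover (P : Set Pixel) (CC : List GridCycle) : Prop :=
  (∀ C ∈ CC, C.covers ⊆ P) ∧ ∀ p ∈ P, ∃ C ∈ CC, p ∈ C.covers

/-- The number of turns of a cycle cover. -/
def coverTurns (CC : List GridCycle) : ℕ := (CC.map GridCycle.turns).sum

/-- A horizontal strip of `P`: a maximal horizontal run of pixels of `P`. -/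
def IsHStrip (P S : Set Pixel) : Prop :=
  ∃ x y : ℤ, ∃ ℓ : ℕ, S = {p : Pixel | p.2 = y ∧ x ≤ p.1 ∧ p.1 ≤ x + (ℓ : ℤ)} ∧
    S ⊆ P ∧ (x - 1, y) ∉ P ∧ (x + (ℓ : ℤ) + 1, y) ∉ P

/-- A vertical strip of `P`: a maximal vertical run of pixels of `P`. -/
def IsVStrip (P S : Set Pixel) : Prop :=
  ∃ x y : ℤ, ∃ ℓ : ℕ, S = {p : Pixel | p.1 = x ∧ y ≤ p.2 ∧ p.2 ≤ y + (ℓ : ℤ)} ∧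
    S ⊆ P ∧ (x, y - 1) ∉ P ∧ (x, y + (ℓ : ℤ) + 1) ∉ P

/-- A strip of `P` is a horizontal or vertical strip. -/
def IsStrip (P S : Set Pixel) : Prop := IsHStrip P S ∨ IsVStrip P S

/-- A strip cover of `P`: a set of strips of `P` whose union is `P`. -/
def IsStripCover (P : Set Pixel) (F : Set (Set Pixel)) : Prop :=
  (∀ S ∈ F, IsStrip P S) ∧ ⋃₀ F = P

/-- The minimum size of a strip cover of `P`. -/
noncomputable def minStripCover (P : Set Pixel) : ℕ :=
  sInf {m | ∃ F, IsStripCover P F ∧ F.ncard = m}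

/-- A rook placement in `P`: a subset of `P` no two distinct elements of which
lie in a common strip of `P`. -/
def IsRookPlacement (P R : Set Pixel) : Prop :=
  R ⊆ P ∧ ∀ p ∈ R, ∀ q ∈ R, p ≠ q → ¬∃ S, IsStrip P S ∧ p ∈ S ∧ q ∈ S

/-- A maximal rook placement: every pixel of `P` lies in a common strip with
some element of `R`. -/
def IsMaximalRookPlacement (P R : Set Pixel) : Prop :=
  IsRookPlacement P R ∧ ∀ p ∈ P, ∃ r ∈ R, ∃ S, IsStrip P S ∧ p ∈ S ∧ r ∈ S

/-!
Cut `C₁` open at a pixel `q` and `C₂` at the adjacent pixel `q + d`, and join them: once around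
`C₁` from `q` back to `q`, a step to `q + d`, once around `C₂` back to `q + d`, a step back.
At `q` the turn `u → v` of `C₁` becomes the detour `u → d`, `-d → v`, which costs at most two
more turns, and none more if `C₁` actually turns at `q` (disjointness rules out `u = -d` and
`v = d`); likewise at `q + d` for `C₂`. So it suffices to find an adjacent pair `(q, q + d)` at
which one of the two cycles turns. If both went straight at every such pair, the pairs would be
closed under the translation by the unit vector perpendicular to `d`, so there would be
infinitely many of them.
-/

open Finset

theorem Function.Periodic.sum_range_add {M : Type*} [AddCommMonoid M] {g : ℤ → M} {n : ℕ}
    (hg : Function.Periodic g n) (a : ℤ) :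
    ∑ i ∈ range n, g (a + i) = ∑ i ∈ range n, g i := by
  have shift : ∀ c : ℤ, ∑ i ∈ range n, g (c + 1 + i) = ∑ i ∈ range n, g (c + i) := by
    intro c
    cases n with
    | zero => simp
    | succ m =>
      rw [sum_range_succ, sum_range_succ']
      have wrap : g (c + 1 + m) = g (c + 0) := by
        rw [← hg (c + 0)]; push_cast; ring_nf
      rw [wrap]
      congr 1
      exact sum_congr rfl fun i _ => congrArg g (by push_cast; ring)
  induction a using Int.induction_on with
  | zero => simp
  | succ a ih => rw [shift, ih]
  | pred a ih => rw [← ih, ← shift, sub_add_cancel]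

theorem Set.infinite_of_forall_add_mem {M : Type*} [AddCommGroup M] [Module.IsTorsionFree ℤ M]
    {S : Set M} {e : M} (he : e ≠ 0) (hS : S.Nonempty) (h : ∀ x ∈ S, x + e ∈ S) :
    S.Infinite := by
  obtain ⟨x, hx⟩ := hS
  have mem : ∀ n : ℕ, x + (n : ℤ) • e ∈ S := by
    intro n
    induction n with
    | zero => simpa using hx
    | succ n ih => simpa [add_smul, add_assoc] using h _ ih
  exact Set.infinite_of_injective_forall_mem
    ((add_right_injective x).comp ((smul_left_injective ℤ he).comp Nat.cast_injective)) mem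

def IsUnitStep (x : Pixel) : Prop := x = (1, 0) ∨ x = (-1, 0) ∨ x = (0, 1) ∨ x = (0, -1)

theorem adjacent_iff_isUnitStep {p q : Pixel} : Adjacent p q ↔ IsUnitStep (q - p) := by
  obtain ⟨x, y⟩ := p
  obtain ⟨z, w⟩ := q
  simp only [Adjacent, IsUnitStep, Prod.mk_sub_mk, Prod.mk.injEq, Int.abs_eq_natAbs]
  omega

theorem Adjacent.symm {p q : Pixel} (h : Adjacent p q) : Adjacent q p := by
  rw [adjacent_iff_isUnitStep] at *
  rcases h with h | h | h | h <;> simp [IsUnitStep, ← neg_sub q p, h]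

def turnCostOf (u v : Pixel) : ℕ := if v = u then 0 else if v = -u then 2 else 1

/-- Replacing the turn `u → v` by a step out along `d` and back: `u → d`, then `-d → v`. -/
def detourCost (u d v : Pixel) : ℕ := turnCostOf u d + turnCostOf (-d) v

def perp (d : Pixel) : Pixel := (-d.2, d.1)

section UnitSteps

variable {u v d x : Pixel}

theorem IsUnitStep.perp_ne_zero (hd : IsUnitStep d) : perp d ≠ 0 := by
  rcases hd with rfl | rfl | rfl | rfl <;> decide

theorem IsUnitStep.eq_perp_or_eq_neg_perp (hd : IsUnitStep d) (hx : IsUnitStep x)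
    (h₁ : x ≠ d) (h₂ : x ≠ -d) : x = perp d ∨ x = -perp d := by
  rcases hd with rfl | rfl | rfl | rfl <;> rcases hx with rfl | rfl | rfl | rfl <;>
    simp_all <;> decide

theorem detourCost_le (hu : IsUnitStep u) (hv : IsUnitStep v) (hd : IsUnitStep d) :
    detourCost u d v ≤ turnCostOf u v + 2 := by
  rcases hu with rfl | rfl | rfl | rfl <;> rcases hv with rfl | rfl | rfl | rfl <;>
    rcases hd with rfl | rfl | rfl | rfl <;> decide

theorem detourCost_le_of_ne (hu : IsUnitStep u) (hv : IsUnitStep v) (hd : IsUnitStep d)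
    (hud : u ≠ -d) (hvd : v ≠ d) (huv : u ≠ v) :
    detourCost u d v ≤ turnCostOf u v := by
  rcases hu with rfl | rfl | rfl | rfl <;> rcases hv with rfl | rfl | rfl | rfl <;>
    rcases hd with rfl | rfl | rfl | rfl <;> simp_all [detourCost] <;> decide

end UnitSteps

namespace GridCycle

variable (C : GridCycle)

def inStep (i : ℤ) : Pixel := C.pts i - C.pts (i - 1)

def outStep (i : ℤ) : Pixel := C.pts (i + 1) - C.pts i

theorem turnCost_eq (i : ℤ) : C.turnCost i = turnCostOf (C.inStep i) (C.outStep i) := rfl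

theorem isUnitStep_outStep (i : ℤ) : IsUnitStep (C.outStep i) :=
  adjacent_iff_isUnitStep.mp (C.adj i)

theorem isUnitStep_inStep (i : ℤ) : IsUnitStep (C.inStep i) := by
  have h := C.isUnitStep_outStep (i - 1)
  rwa [outStep, sub_add_cancel] at h

theorem pts_mem_covers (i : ℤ) : C.pts i ∈ C.covers := ⟨i, rfl⟩

theorem k_pos : 0 < C.k := by have := C.two_le; omega

theorem pts_emod (i : ℤ) : C.pts (i % C.k) = C.pts i := by
  rw [Int.emod_def, mul_comm]
  exact Function.Periodic.sub_int_mul_eq C.periodic _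

theorem pts_eq_of_modEq {i j : ℤ} (h : i ≡ j [ZMOD C.k]) : C.pts i = C.pts j := by
  rw [← pts_emod, h, pts_emod]

theorem covers_finite : C.covers.Finite := by
  refine ((Set.finite_Ico (0 : ℤ) C.k).image C.pts).subset ?_
  rintro _ ⟨i, rfl⟩
  have hk : (0 : ℤ) < C.k := by exact_mod_cast C.k_pos
  exact ⟨i % C.k, ⟨Int.emod_nonneg i hk.ne', Int.emod_lt_of_pos i hk⟩, C.pts_emod i⟩

theorem turnCost_periodic : Function.Periodic C.turnCost C.k := by
  intro i
  rw [turnCost, turnCost, add_right_comm, add_sub_right_comm, C.periodic, C.periodic, C.periodic]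

theorem turns_eq_sum_add (a : ℤ) : C.turns = ∑ i ∈ range C.k, C.turnCost (a + i) :=
  (C.turnCost_periodic.sum_range_add a).symm

theorem sum_range_succ_add_turnCost_eq (a : ℤ) (g : ℕ → ℕ)
    (hg : ∀ j, 0 < j → j < C.k → g j = C.turnCost (a + j)) :
    ∑ j ∈ range (C.k + 1), g j + C.turnCost a = C.turns + g 0 + g C.k := by
  obtain ⟨m, hm⟩ : ∃ m, C.k = m + 1 := ⟨C.k - 1, by have := C.k_pos; omega⟩
  have hmid : ∑ j ∈ range m, g (j + 1) = ∑ j ∈ range m, C.turnCost (a + (j + 1 : ℕ)) :=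
    sum_congr rfl fun j hj => hg _ (by omega) (by rw [mem_range] at hj; omega)
  rw [C.turns_eq_sum_add a, hm, sum_range_succ, sum_range_succ', sum_range_succ', hmid,
    Nat.cast_zero, add_zero]
  ring

variable {C}

theorem inStep_ne_neg_and_outStep_ne {i : ℤ} {x : Pixel} (h : C.pts i + x ∉ C.covers) :
    C.inStep i ≠ -x ∧ C.outStep i ≠ x := by
  constructor <;> intro hx <;> apply h
  · rw [← neg_neg x, ← hx, inStep, ← sub_eq_add_neg, sub_sub_cancel]
    exact C.pts_mem_covers (i - 1)
  · rw [← hx, outStep, add_sub_cancel]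
    exact C.pts_mem_covers (i + 1)

theorem steps_ne_of_disjoint {C₁ C₂ : GridCycle} (hdisj : Disjoint C₁.covers C₂.covers)
    (a b : ℤ) :
    (C₁.inStep a ≠ -(C₂.pts b - C₁.pts a) ∧ C₁.outStep a ≠ C₂.pts b - C₁.pts a) ∧
      (C₂.inStep b ≠ -(C₁.pts a - C₂.pts b) ∧ C₂.outStep b ≠ C₁.pts a - C₂.pts b) := by
  constructor <;> apply inStep_ne_neg_and_outStep_ne <;> rw [add_sub_cancel]
  exacts [Set.disjoint_right.mp hdisj (C₂.pts_mem_covers b),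
    Set.disjoint_left.mp hdisj (C₁.pts_mem_covers a)]

theorem add_perp_mem_covers_of_straight {i : ℤ} {d : Pixel} (hd : IsUnitStep d)
    (hs : C.inStep i = C.outStep i) (h₁ : C.outStep i ≠ d) (h₂ : C.outStep i ≠ -d) :
    C.pts i + perp d ∈ C.covers := by
  rcases hd.eq_perp_or_eq_neg_perp (C.isUnitStep_outStep i) h₁ h₂ with h | h
  · rw [← h, outStep, add_sub_cancel]
    exact C.pts_mem_covers (i + 1)
  · rw [← neg_neg (perp d), ← h, ← hs, inStep, ← sub_eq_add_neg, sub_sub_cancel]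
    exact C.pts_mem_covers (i - 1)

/-- The closed walk that goes once around `C₁` from `C₁.pts a` back to `C₁.pts a`, steps to
`C₂.pts b`, goes once around `C₂` back to `C₂.pts b` and steps back: positions `0, …, C₁.k`
and `C₁.k + 1, …, C₁.k + C₂.k + 1` of one period. -/
def spliceWindow (C₁ C₂ : GridCycle) (a b j : ℤ) : Pixel :=
  if j ≤ C₁.k then C₁.pts (a + j) else C₂.pts (b + (j - C₁.k - 1))

variable {C₁ C₂ : GridCycle} {a b : ℤ}

theorem spliceWindow_of_le {j : ℤ} (hj : j ≤ C₁.k) : spliceWindow C₁ C₂ a b j = C₁.pts (a + j) :=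
  if_pos hj

theorem spliceWindow_of_lt {j : ℤ} (hj : C₁.k < j) :
    spliceWindow C₁ C₂ a b j = C₂.pts (b + (j - C₁.k - 1)) :=
  if_neg (not_le.mpr hj)

theorem adjacent_spliceWindow (h : Adjacent (C₁.pts a) (C₂.pts b)) (i : ℤ) :
    Adjacent (spliceWindow C₁ C₂ a b (i % (C₁.k + 1 + (C₂.k + 1) : ℕ)))
      (spliceWindow C₁ C₂ a b ((i + 1) % (C₁.k + 1 + (C₂.k + 1) : ℕ))) := by
  set K : ℤ := ((C₁.k + 1 + (C₂.k + 1) : ℕ) : ℤ) with hK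
  push_cast at hK
  have hK0 : 0 < K := by omega
  have hj0 := Int.emod_nonneg i hK0.ne'
  have hjK := Int.emod_lt_of_pos i hK0
  rw [← Int.emod_add_emod]
  generalize i % K = j at *
  rcases (show j + 1 < K ∨ j + 1 = K by omega) with hlt | heq
  · rw [Int.emod_eq_of_lt (by omega) hlt]
    rcases lt_trichotomy j C₁.k with hj | rfl | hj
    · rw [spliceWindow_of_le hj.le, spliceWindow_of_le (by omega), ← add_assoc]
      exact C₁.adj _
    · rw [spliceWindow_of_le le_rfl, spliceWindow_of_lt (by omega), C₁.periodic]
      simpa using h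
    · rw [spliceWindow_of_lt hj, spliceWindow_of_lt (by omega),
        show b + (j + 1 - C₁.k - 1) = b + (j - C₁.k - 1) + 1 by ring]
      exact C₂.adj _
  · rw [heq, Int.emod_self, spliceWindow_of_lt (j := j) (by omega),
      spliceWindow_of_le (j := 0) (by positivity), add_zero,
      show b + (j - C₁.k - 1) = b + C₂.k by omega, C₂.periodic]
    exact h.symm

def splice (C₁ C₂ : GridCycle) (a b : ℤ) (h : Adjacent (C₁.pts a) (C₂.pts b)) : GridCycle where
  k := C₁.k + 1 + (C₂.k + 1)
  two_le := by omega
  pts i := spliceWindow C₁ C₂ a b (i % (C₁.k + 1 + (C₂.k + 1) : ℕ))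
  periodic i := by rw [Int.add_emod_right]
  adj := adjacent_spliceWindow h

variable (h : Adjacent (C₁.pts a) (C₂.pts b))
include h

theorem splice_pts_of_le {j : ℤ} (h0 : 0 ≤ j) (hj : j ≤ C₁.k) :
    (splice C₁ C₂ a b h).pts j = C₁.pts (a + j) := by
  change spliceWindow C₁ C₂ a b (j % _) = _
  rw [Int.emod_eq_of_lt h0 (by push_cast; omega), spliceWindow_of_le hj]

theorem splice_pts_add {j : ℤ} (h0 : 0 ≤ j) (hj : j ≤ C₂.k) :
    (splice C₁ C₂ a b h).pts (C₁.k + 1 + j) = C₂.pts (b + j) := by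
  change spliceWindow C₁ C₂ a b (_ % _) = _
  rw [Int.emod_eq_of_lt (by omega) (by push_cast; omega), spliceWindow_of_lt (by omega)]
  congr 1
  ring

theorem splice_covers : (splice C₁ C₂ a b h).covers = C₁.covers ∪ C₂.covers := by
  apply Set.Subset.antisymm
  · rintro _ ⟨i, rfl⟩
    change spliceWindow C₁ C₂ a b _ ∈ _
    unfold spliceWindow
    split_ifs
    exacts [Or.inl (C₁.pts_mem_covers _), Or.inr (C₂.pts_mem_covers _)]
  · have hk₁ : (0 : ℤ) < C₁.k := by exact_mod_cast C₁.k_pos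
    have hk₂ : (0 : ℤ) < C₂.k := by exact_mod_cast C₂.k_pos
    rintro _ (⟨t, rfl⟩ | ⟨t, rfl⟩)
    · have := Int.emod_nonneg (t - a) hk₁.ne'
      have := Int.emod_lt_of_pos (t - a) hk₁
      refine ⟨(t - a) % C₁.k, ?_⟩
      rw [splice_pts_of_le h (by omega) (by omega)]
      exact C₁.pts_eq_of_modEq (((Int.mod_modEq _ _).add_left a).trans (by simp))
    · have := Int.emod_nonneg (t - b) hk₂.ne'
      have := Int.emod_lt_of_pos (t - b) hk₂
      refine ⟨C₁.k + 1 + (t - b) % C₂.k, ?_⟩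
      rw [splice_pts_add h (by omega) (by omega)]
      exact C₂.pts_eq_of_modEq (((Int.mod_modEq _ _).add_left b).trans (by simp))

theorem splice_pts_neg_one : (splice C₁ C₂ a b h).pts (-1) = C₂.pts b := by
  rw [← (splice C₁ C₂ a b h).periodic, show (-1 : ℤ) + (splice C₁ C₂ a b h).k = C₁.k + 1 + C₂.k by
      simp only [splice]; push_cast; ring,
    splice_pts_add h (by positivity) le_rfl, C₂.periodic]

theorem splice_pts_k : (splice C₁ C₂ a b h).pts (C₁.k + 1 + C₂.k + 1) = C₁.pts a := by
  rw [show (C₁.k + 1 + C₂.k + 1 : ℤ) = 0 + (splice C₁ C₂ a b h).k by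
      simp only [splice]; push_cast; ring,
    (splice C₁ C₂ a b h).periodic, splice_pts_of_le h le_rfl (by positivity), add_zero]

theorem splice_turnCost_of_lt {j : ℕ} (h0 : 0 < j) (hj : j < C₁.k) :
    (splice C₁ C₂ a b h).turnCost j = C₁.turnCost (a + j) := by
  simp only [turnCost_eq, inStep, outStep]
  rw [splice_pts_of_le h (j := j) (by positivity) (by omega),
    splice_pts_of_le h (j := j - 1) (by omega) (by omega),
    splice_pts_of_le h (j := j + 1) (by omega) (by omega), ← add_assoc, ← add_sub_assoc]

theorem splice_turnCost_add_of_lt {j : ℕ} (h0 : 0 < j) (hj : j < C₂.k) :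
    (splice C₁ C₂ a b h).turnCost ((C₁.k + 1 + j : ℕ) : ℤ) = C₂.turnCost (b + j) := by
  simp only [turnCost_eq, inStep, outStep]
  push_cast
  rw [show (C₁.k + 1 + j + 1 : ℤ) = C₁.k + 1 + (j + 1) by ring,
    show (C₁.k + 1 + j - 1 : ℤ) = C₁.k + 1 + (j - 1) by ring,
    splice_pts_add h (j := j) (by positivity) (by omega),
    splice_pts_add h (j := j - 1) (by omega) (by omega),
    splice_pts_add h (j := j + 1) (by omega) (by omega), ← add_assoc, ← add_sub_assoc]

theorem splice_turnCost_zero :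
    (splice C₁ C₂ a b h).turnCost 0 = turnCostOf (C₁.pts a - C₂.pts b) (C₁.outStep a) := by
  simp only [turnCost_eq, inStep, outStep, zero_sub, zero_add]
  rw [splice_pts_neg_one h, splice_pts_of_le h (j := 0) le_rfl (by positivity),
    splice_pts_of_le h (j := 1) zero_le_one (by exact_mod_cast C₁.k_pos), add_zero]

theorem splice_turnCost_k₁ :
    (splice C₁ C₂ a b h).turnCost C₁.k = turnCostOf (C₁.inStep a) (C₂.pts b - C₁.pts a) := by
  simp only [turnCost_eq, inStep, outStep]
  have hk := C₁.k_pos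
  rw [splice_pts_of_le h (j := C₁.k) (by positivity) le_rfl,
    splice_pts_of_le h (j := C₁.k - 1) (by omega) (by omega),
    ← add_zero ((C₁.k : ℤ) + 1), splice_pts_add h le_rfl (by positivity), add_zero,
    C₁.periodic, ← add_sub_assoc, ← sub_add_eq_add_sub, C₁.periodic]

theorem splice_turnCost_k₁_add_one :
    (splice C₁ C₂ a b h).turnCost (C₁.k + 1) = turnCostOf (C₂.pts b - C₁.pts a) (C₂.outStep b) := by
  simp only [turnCost_eq, inStep, outStep, add_sub_cancel_right]
  rw [splice_pts_add h (j := 1) zero_le_one (by exact_mod_cast C₂.k_pos),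
    ← add_zero ((C₁.k : ℤ) + 1), splice_pts_add h le_rfl (by positivity),
    splice_pts_of_le h (j := C₁.k) (by positivity) le_rfl, add_zero, C₁.periodic]

theorem splice_turnCost_k₁_add_one_add_k₂ :
    (splice C₁ C₂ a b h).turnCost (C₁.k + 1 + C₂.k) =
      turnCostOf (C₂.inStep b) (C₁.pts a - C₂.pts b) := by
  simp only [turnCost_eq, inStep, outStep]
  have hk := C₂.k_pos
  rw [splice_pts_k h, splice_pts_add h (by positivity) le_rfl, C₂.periodic,
    show (C₁.k + 1 + C₂.k - 1 : ℤ) = C₁.k + 1 + (C₂.k - 1) by ring,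
    splice_pts_add h (by omega) (by omega), ← add_sub_assoc, ← sub_add_eq_add_sub, C₂.periodic]


theorem splice_turns_add :
    (splice C₁ C₂ a b h).turns + C₁.turnCost a + C₂.turnCost b =
      C₁.turns + C₂.turns + detourCost (C₁.inStep a) (C₂.pts b - C₁.pts a) (C₁.outStep a) +
        detourCost (C₂.inStep b) (C₁.pts a - C₂.pts b) (C₂.outStep b) := by
  have h₁ := C₁.sum_range_succ_add_turnCost_eq a (fun j => (splice C₁ C₂ a b h).turnCost j)
    fun j h0 hj => splice_turnCost_of_lt h h0 hj
  have h₂ := C₂.sum_range_succ_add_turnCost_eq b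
    (fun j => (splice C₁ C₂ a b h).turnCost ((C₁.k + 1 + j : ℕ) : ℤ))
    fun j h0 hj => splice_turnCost_add_of_lt h h0 hj
  simp only [Nat.cast_add, Nat.cast_one, Nat.cast_zero, add_zero] at h₁ h₂
  rw [splice_turnCost_zero, splice_turnCost_k₁] at h₁
  rw [splice_turnCost_k₁_add_one, splice_turnCost_k₁_add_one_add_k₂] at h₂
  have hsplit := sum_range_add (fun j => (splice C₁ C₂ a b h).turnCost j) (C₁.k + 1) (C₂.k + 1)
  simp only [Nat.cast_add, Nat.cast_one] at hsplit
  simp only [detourCost, neg_sub]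
  change ∑ j ∈ range (C₁.k + 1 + (C₂.k + 1)), _ + _ + _ = _
  omega

theorem splice_turns_le (hdisj : Disjoint C₁.covers C₂.covers)
    (hturn : C₁.inStep a ≠ C₁.outStep a ∨ C₂.inStep b ≠ C₂.outStep b) :
    (splice C₁ C₂ a b h).turns ≤ C₁.turns + C₂.turns + 2 := by
  obtain ⟨⟨hu, hv⟩, ⟨hw', hw⟩⟩ := steps_ne_of_disjoint hdisj a b
  have hd₁ : IsUnitStep (C₂.pts b - C₁.pts a) := adjacent_iff_isUnitStep.mp h
  have hd₂ : IsUnitStep (C₁.pts a - C₂.pts b) := adjacent_iff_isUnitStep.mp h.symm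
  have hsplice := splice_turns_add h
  rw [turnCost_eq, turnCost_eq] at hsplice
  rcases hturn with hturn | hturn
  · have := detourCost_le_of_ne (C₁.isUnitStep_inStep a) (C₁.isUnitStep_outStep a) hd₁ hu hv hturn
    have := detourCost_le (C₂.isUnitStep_inStep b) (C₂.isUnitStep_outStep b) hd₂
    omega
  · have := detourCost_le (C₁.isUnitStep_inStep a) (C₁.isUnitStep_outStep a) hd₁
    have := detourCost_le_of_ne (C₂.isUnitStep_inStep b) (C₂.isUnitStep_outStep b) hd₂ hw' hw hturn
    omega

end GridCycle

open GridCycle in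
theorem exists_adjacent_with_turn {C₁ C₂ : GridCycle} (hdisj : Disjoint C₁.covers C₂.covers)
    {p d : Pixel} (hd : IsUnitStep d) (hp : p ∈ C₁.covers) (hpd : p + d ∈ C₂.covers) :
    ∃ a b, Adjacent (C₁.pts a) (C₂.pts b) ∧
      (C₁.inStep a ≠ C₁.outStep a ∨ C₂.inStep b ≠ C₂.outStep b) := by
  by_contra! hstraight
  refine Set.infinite_of_forall_add_mem (S := {q | q ∈ C₁.covers ∧ q + d ∈ C₂.covers})
    hd.perp_ne_zero ⟨p, hp, hpd⟩ ?_ (C₁.covers_finite.subset fun q hq => hq.1)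
  rintro _ ⟨⟨a, rfl⟩, b, hb⟩
  have hdb : C₂.pts b - C₁.pts a = d := by rw [hb, add_sub_cancel_left]
  obtain ⟨hs₁, hs₂⟩ := hstraight a b (by rw [adjacent_iff_isUnitStep, hdb]; exact hd)
  obtain ⟨⟨hu, hv⟩, ⟨hw', hw⟩⟩ := steps_ne_of_disjoint hdisj a b
  rw [hdb] at hu hv
  rw [← neg_sub, hdb] at hw' hw
  rw [neg_neg] at hw'
  refine ⟨add_perp_mem_covers_of_straight hd hs₁ hv (hs₁ ▸ hu), ?_⟩
  rw [add_right_comm, ← hb]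
  exact add_perp_mem_covers_of_straight hd hs₂ (hs₂ ▸ hw') hw

/-- Merging two touching cycles: if cycles `C₁`, `C₂` have disjoint covered
pixel sets but contain adjacent pixels `p₁`, `p₂`, there is a single cycle
covering the union of their covered pixel sets with at most `t₁ + t₂ + 2`
turns. -/
theorem merge_touching_cycles (C₁ C₂ : GridCycle)
    (hdisj : Disjoint C₁.covers C₂.covers)
    (p₁ p₂ : Pixel) (hp₁ : p₁ ∈ C₁.covers) (hp₂ : p₂ ∈ C₂.covers)
    (hadj : Adjacent p₁ p₂) :
    ∃ C : GridCycle, C.covers = C₁.covers ∪ C₂.covers ∧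
      C.turns ≤ C₁.turns + C₂.turns + 2 := by
  obtain ⟨a, b, hab, hturn⟩ := exists_adjacent_with_turn hdisj
    (adjacent_iff_isUnitStep.mp hadj) hp₁ (by rwa [add_sub_cancel])
  exact ⟨_, GridCycle.splice_covers hab, GridCycle.splice_turns_le hab hdisj hturn⟩
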